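/- arXiv:math/0505020 — 5 statements merged into one kernel-verified Lean document; each statement's English description precedes it below -/
import Mathlib

section
/- The strong descent set D_−(π) uniquely determines the permutation π: if two permutations π, σ ∈ S_n have D_−(π) = D_−(σ), then π = σ. -/
/-!
Write `f = π⁻¹`, so that `swap a b * π` corresponds to exchanging the entries of `f` at positions
`a < b`. When `f b < f a` this lowers the inversion number by `1 + 2k`, where `k` counts the
positions `c` strictly between `a` and `b` with `f b < f c < f a`. Hence the strong descents of `π`
are exactly the inversions `(a, b)` of `f` admitting no such `c`. Every inversion of `f` is a chain
of these minimal ones (induction on `b - a`), so `D_−(π)` determines the inversion set of `π⁻¹`, and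
a permutation of a finite linear order is determined by its inversion set.
-/

open Equiv Finset

/-- Number of inversions (Coxeter length) of a permutation of `Fin n`. -/
def invNum {n : ℕ} (π : Equiv.Perm (Fin n)) : ℕ :=
  (Finset.univ.filter (fun p : Fin n × Fin n => p.1 < p.2 ∧ π p.2 < π p.1)).card

/-- Down degree: number of transpositions `t_{a,b}` with `ℓ(t_{a,b} π) = ℓ(π) - 1`. -/
def downDeg {n : ℕ} (π : Equiv.Perm (Fin n)) : ℕ :=
  (Finset.univ.filter (fun p : Fin n × Fin n =>
    p.1 < p.2 ∧ invNum (Equiv.swap p.1 p.2 * π) + 1 = invNum π)).card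

/-- Total degree: number of transpositions `t_{a,b}` with `ℓ(t_{a,b} π) = ℓ(π) ± 1`. -/
def totalDeg {n : ℕ} (π : Equiv.Perm (Fin n)) : ℕ :=
  (Finset.univ.filter (fun p : Fin n × Fin n =>
    p.1 < p.2 ∧ (invNum (Equiv.swap p.1 p.2 * π) + 1 = invNum π ∨
      invNum (Equiv.swap p.1 p.2 * π) = invNum π + 1))).card

theorem invNum_inv {n : ℕ} (π : Perm (Fin n)) : invNum π⁻¹ = invNum π :=
  card_equiv ((π⁻¹.prodCongr π⁻¹).trans (Equiv.prodComm _ _)) fun p => by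
    simp [and_comm]

theorem card_filter_eq_card_filter_lt_add_card_filter_gt {α β : Type*} [LinearOrder β]
    {h : α → β} (hh : Function.Injective h) (s : Finset (α × α)) (hs : ∀ p ∈ s, p.1 ≠ p.2) :
    #s = #{p ∈ s | h p.1 < h p.2} + #{p ∈ s | h p.2 < h p.1} := by
  rw [← card_filter_add_card_filter_not (s := s) (fun p => h p.1 < h p.2)]
  congr 1
  exact congrArg card <| filter_congr fun p hp => not_lt.trans (hh.ne (hs p hp)).symm.le_iff_lt

theorem card_filter_lt_add_card_filter_gt_eq {ι β : Type*} [LinearOrder β] (S : Finset ι)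
    (g : ι → β) {x y : β} (hxy : x < y) (hS : ∀ c ∈ S, g c ≠ x ∧ g c ≠ y) :
    #{c ∈ S | g c < y} + #{c ∈ S | x < g c} =
      #{c ∈ S | y < g c} + #{c ∈ S | g c < x} + 2 * #{c ∈ S | x < g c ∧ g c < y} := by
  simp only [card_filter, ← sum_add_distrib, mul_sum]
  refine sum_congr rfl fun c hc => ?_
  have := hS c hc
  split_ifs <;> grind

section SwapPositions

variable {n : ℕ} {a b : Fin n}

theorem lt_and_swap_apply_lt_swap_apply_iff (hab : a < b) {i j : Fin n} :
    i < j ∧ swap a b j < swap a b i ↔ i = a ∧ a < j ∧ j ≤ b ∨ j = b ∧ a < i ∧ i < b := by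
  simp only [swap_apply_def]
  split_ifs <;> simp only [Fin.ext_iff, Fin.lt_def, Fin.le_def] at * <;> omega

theorem invNum_mul_swap (f : Perm (Fin n)) (a b : Fin n) :
    invNum (f * swap a b) = #{p : Fin n × Fin n | swap a b p.1 < swap a b p.2 ∧ f p.2 < f p.1} :=
  card_equiv ((swap a b).prodCongr (swap a b)) fun p => by
    simp only [mem_filter, mem_univ, true_and]
    simp

theorem card_pairs_reversed_by_swap (hab : a < b) (R : Fin n → Fin n → Prop) [DecidableRel R] :
    #{p : Fin n × Fin n | p.1 < p.2 ∧ swap a b p.2 < swap a b p.1 ∧ R p.1 p.2} =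
      #{c ∈ Ioc a b | R a c} + #{c ∈ Ioo a b | R c b} := by
  simp only [← and_assoc, lt_and_swap_apply_lt_swap_apply_iff hab]
  rw [← card_filter_add_card_filter_not (fun p : Fin n × Fin n => p.1 = a), filter_filter,
    filter_filter]
  congr 1
  · refine card_nbij' Prod.snd (fun c => (a, c)) ?_ ?_ ?_ ?_ <;>
      intro p <;> simp only [mem_coe, mem_filter, mem_univ, true_and, mem_Ioc] <;> grind
  · refine card_nbij' Prod.fst (fun c => (c, b)) ?_ ?_ ?_ ?_ <;>
      intro p <;> simp only [mem_coe, mem_filter, mem_univ, true_and, mem_Ioo] <;> grind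

theorem invNum_mul_swap_add (f : Perm (Fin n)) (hab : a < b) (hf : f b < f a) :
    invNum (f * swap a b) + 2 * #{c ∈ Ioo a b | f b < f c ∧ f c < f a} + 1 = invNum f := by
  -- The pairs whose order `swap a b` preserves are inversions of `f` and of `f * swap a b` alike;
  -- the reversed ones all involve `a` or `b`.
  set C := #{p : Fin n × Fin n | p.1 < p.2 ∧ swap a b p.1 < swap a b p.2 ∧ f p.2 < f p.1}
  have hf_split : invNum f = C +
      #{p : Fin n × Fin n | p.1 < p.2 ∧ swap a b p.2 < swap a b p.1 ∧ f p.2 < f p.1} := by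
    rw [invNum, card_filter_eq_card_filter_lt_add_card_filter_gt (swap a b).injective _
      (fun p hp => (mem_filter.1 hp).2.1.ne), filter_filter, filter_filter]
    congr 2 <;> ext p <;> simp only [mem_filter, mem_univ, true_and] <;> tauto
  have hfs_split : invNum (f * swap a b) = C +
      #{p : Fin n × Fin n | p.1 < p.2 ∧ swap a b p.2 < swap a b p.1 ∧ f p.1 < f p.2} := by
    rw [invNum_mul_swap, card_filter_eq_card_filter_lt_add_card_filter_gt Function.injective_id _
      (fun p hp heq => by simp [heq] at hp), filter_filter, filter_filter]
    congr 1
    · congr 1; ext p; simp only [mem_filter, mem_univ, true_and, id]; tauto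
    · exact card_equiv (Equiv.prodComm _ _) fun p => by
        simp only [mem_filter, mem_univ, true_and, prodComm_apply, Prod.fst_swap,
          Prod.snd_swap, id_eq]
        tauto
  have hlost :
      #{p : Fin n × Fin n | p.1 < p.2 ∧ swap a b p.2 < swap a b p.1 ∧ f p.2 < f p.1} =
        #{c ∈ Ioo a b | f c < f a} + 1 + #{c ∈ Ioo a b | f b < f c} := by
    rw [card_pairs_reversed_by_swap hab (fun i j => f j < f i), ← Ioo_insert_right hab,
      filter_insert, if_pos hf, card_insert_of_notMem (by simp)]
  have hgained :
      #{p : Fin n × Fin n | p.1 < p.2 ∧ swap a b p.2 < swap a b p.1 ∧ f p.1 < f p.2} =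
        #{c ∈ Ioo a b | f a < f c} + #{c ∈ Ioo a b | f c < f b} := by
    rw [card_pairs_reversed_by_swap hab (fun i j => f i < f j), ← Ioo_insert_right hab,
      filter_insert, if_neg hf.asymm]
  have hmid := card_filter_lt_add_card_filter_gt_eq (Ioo a b) f hf fun c hc => by
    rw [mem_Ioo] at hc
    exact ⟨f.injective.ne hc.2.ne, f.injective.ne hc.1.ne'⟩
  omega

theorem invNum_mul_swap_add_one_eq_iff (f : Perm (Fin n)) (hab : a < b) :
    invNum (f * swap a b) + 1 = invNum f ↔
      f b < f a ∧ ∀ c ∈ Ioo a b, ¬(f b < f c ∧ f c < f a) := by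
  rcases lt_or_gt_of_ne (f.injective.ne hab.ne') with hf | hf
  · have := invNum_mul_swap_add f hab hf
    rw [← filter_eq_empty_iff, ← card_eq_zero]
    omega
  · have hfs : (f * swap a b) b < (f * swap a b) a := by simpa using hf
    have := invNum_mul_swap_add _ hab hfs
    rw [mul_assoc, swap_mul_self, mul_one] at this
    simp only [hf.asymm, false_and, iff_false]
    omega

theorem invNum_swap_mul_add_one_eq_iff (π : Perm (Fin n)) (hab : a < b) :
    invNum (swap a b * π) + 1 = invNum π ↔
      π⁻¹ b < π⁻¹ a ∧ ∀ c ∈ Ioo a b, ¬(π⁻¹ b < π⁻¹ c ∧ π⁻¹ c < π⁻¹ a) := by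
  rw [← invNum_mul_swap_add_one_eq_iff π⁻¹ hab, ← invNum_inv, mul_inv_rev, swap_inv, invNum_inv]

end SwapPositions

theorem inversion_of_forall_minimal_inversion {n : ℕ} {α β : Type*} [LT α] [Preorder β]
    {f : Fin n → α} {g : Fin n → β}
    (h : ∀ a b, a < b → f b < f a → (∀ c ∈ Ioo a b, ¬(f b < f c ∧ f c < f a)) → g b < g a)
    {a b : Fin n} (hab : a < b) (hf : f b < f a) : g b < g a := by
  induction hd : (b : ℕ) - a using Nat.strong_induction_on generalizing a b with
  | _ d ih =>
    by_cases hmin : ∀ c ∈ Ioo a b, ¬(f b < f c ∧ f c < f a)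
    · exact h a b hab hf hmin
    push Not at hmin
    obtain ⟨c, hc, hbc, hca⟩ := hmin
    rw [mem_Ioo, Fin.lt_def, Fin.lt_def] at hc
    exact (ih _ (by omega) (Fin.lt_def.2 hc.2) hbc rfl).trans
      (ih _ (by omega) (Fin.lt_def.2 hc.1) hca rfl)

theorem Equiv.eq_of_inversions_iff {ι α : Type*} [LinearOrder ι] [LinearOrder α] [Finite α]
    (f g : ι ≃ α) (h : ∀ i j, i < j → (f j < f i ↔ g j < g i)) : f = g := by
  have hmono : StrictMono (g ∘ f.symm) := by
    intro x y hxy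
    obtain ⟨i, rfl⟩ := f.surjective x
    obtain ⟨j, rfl⟩ := f.surjective y
    simp only [Function.comp_apply, symm_apply_apply]
    rcases lt_or_gt_of_ne (ne_of_apply_ne f hxy.ne) with hij | hij
    · exact lt_of_le_of_ne (not_lt.1 fun hgji => (h i j hij).2 hgji |>.asymm hxy)
        (g.injective.ne hij.ne)
    · exact (h j i hij).1 hxy
  ext i
  simpa using (congrFun hmono.eq_id (f i)).symm

/-- The strong descent set determines the permutation. -/
theorem strong_descent_set_determines {n : ℕ} (π σ : Equiv.Perm (Fin n))
    (h : ∀ a b : Fin n, a < b →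
      (invNum (Equiv.swap a b * π) + 1 = invNum π ↔
       invNum (Equiv.swap a b * σ) + 1 = invNum σ)) :
    π = σ := by
  have hcover : ∀ a b : Fin n, a < b →
      ((π⁻¹ b < π⁻¹ a ∧ ∀ c ∈ Ioo a b, ¬(π⁻¹ b < π⁻¹ c ∧ π⁻¹ c < π⁻¹ a)) ↔
        (σ⁻¹ b < σ⁻¹ a ∧ ∀ c ∈ Ioo a b, ¬(σ⁻¹ b < σ⁻¹ c ∧ σ⁻¹ c < σ⁻¹ a))) := fun a b hab => by
    rw [← invNum_swap_mul_add_one_eq_iff π hab, ← invNum_swap_mul_add_one_eq_iff σ hab]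
    exact h a b hab
  refine inv_injective (Equiv.eq_of_inversions_iff π⁻¹ σ⁻¹ fun i j hij => ⟨?_, ?_⟩)
  · exact inversion_of_forall_minimal_inversion
      (fun a b hab hf hmin => ((hcover a b hab).1 ⟨hf, hmin⟩).1) hij
  · exact inversion_of_forall_minimal_inversion
      (fun a b hab hf hmin => ((hcover a b hab).2 ⟨hf, hmin⟩).1) hij
end

section
/- For every permutation π ∈ S_n, the strong descent graph Γ_−(π) is triangle-free: there do not exist 1 ≤ a < b < c ≤ n with t_{a,b}, t_{a,c}, t_{b,c} all in D_−(π). -/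
open Equiv Finset

section Aux

variable {n : ℕ}

/-- The injection on inversion pairs used in the key counting lemma. -/
private def Fmap (π : Equiv.Perm (Fin n)) (i j b : Fin n) (p : Fin n × Fin n) :
    Fin n × Fin n :=
  if p.2 = i ∧ π p.1 < b then (p.1, j)
  else if p.1 = j ∧ π i < π p.2 then (i, p.2)
  else p

/-- Key lemma: if `a < b`, `π i = a`, `π j = b` with `i < j`, then multiplying by
`swap a b` on the left increases the inversion number by at least `1 + #extra`
where `extra` is any set of positions strictly between `i` and `j` whose values
lie strictly between `a` and `b`. -/
private lemma key_lemma (π : Equiv.Perm (Fin n)) {a b i j : Fin n}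
    (hab : a < b) (hπi : π i = a) (hπj : π j = b) (hij : i < j)
    (extra : Finset (Fin n))
    (hextra : ∀ k ∈ extra, i < k ∧ k < j ∧ a < π k ∧ π k < b) :
    invNum π + 1 + extra.card ≤ invNum (Equiv.swap a b * π) := by
  set σ : Equiv.Perm (Fin n) := Equiv.swap a b * π with hσdef
  have hσi : σ i = b := by simp [hσdef, Equiv.Perm.mul_apply, hπi]
  have hσj : σ j = a := by simp [hσdef, Equiv.Perm.mul_apply, hπj]
  have hne_i : ∀ p : Fin n, p ≠ i → π p ≠ a := by
    intro p hp h; exact hp (π.injective (h.trans hπi.symm))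
  have hne_j : ∀ p : Fin n, p ≠ j → π p ≠ b := by
    intro p hp h; exact hp (π.injective (h.trans hπj.symm))
  have hσo : ∀ p : Fin n, p ≠ i → p ≠ j → σ p = π p := by
    intro p h1 h2
    show Equiv.swap a b (π p) = π p
    exact Equiv.swap_apply_of_ne_of_ne (hne_i p h1) (hne_j p h2)
  have hij' : i ≠ j := ne_of_lt hij
  set s : Finset (Fin n × Fin n) :=
    Finset.univ.filter (fun p : Fin n × Fin n => p.1 < p.2 ∧ π p.2 < π p.1) with hs
  set t : Finset (Fin n × Fin n) :=
    Finset.univ.filter (fun p : Fin n × Fin n => p.1 < p.2 ∧ σ p.2 < σ p.1) with ht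
  set S : Finset (Fin n × Fin n) := insert (i, j) (extra.image fun k => (i, k)) with hS
  have hSmem : ∀ x ∈ S, x = (i, j) ∨ ∃ k ∈ extra, x = (i, k) := by
    intro x hx
    rcases Finset.mem_insert.mp hx with h | h
    · exact Or.inl h
    · rcases Finset.mem_image.mp h with ⟨k, hk, hkx⟩
      exact Or.inr ⟨k, hk, hkx.symm⟩
  have hSsub : S ⊆ t := by
    intro x hx
    rcases hSmem x hx with h | ⟨k, hk, h⟩
    · subst h
      simp only [ht, Finset.mem_filter, Finset.mem_univ, true_and]
      exact ⟨hij, by rw [hσi, hσj]; exact hab⟩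
    · subst h
      obtain ⟨h1, h2, h3, h4⟩ := hextra k hk
      have hki : k ≠ i := (ne_of_lt h1).symm
      have hkj : k ≠ j := ne_of_lt h2
      simp only [ht, Finset.mem_filter, Finset.mem_univ, true_and]
      refine ⟨h1, ?_⟩
      rw [hσi, hσo k hki hkj]
      exact h4
  have hScard : S.card = extra.card + 1 := by
    rw [hS, Finset.card_insert_of_notMem, Finset.card_image_of_injective]
    · intro x y hxy; exact (Prod.ext_iff.mp hxy).2
    · intro h
      rcases Finset.mem_image.mp h with ⟨k, hk, hkx⟩
      have : k = j := (Prod.ext_iff.mp hkx).2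
      exact absurd (hextra k hk).2.1 (by rw [this]; exact lt_irrefl j)
  -- main injection
  have hmaps : ∀ p ∈ s, Fmap π i j b p ∈ t \ S := by
    intro p hp
    simp only [hs, Finset.mem_filter, Finset.mem_univ, true_and] at hp
    obtain ⟨hlt, hinv⟩ := hp
    have hmemS : ∀ x y : Fin n, x ≠ i → (x, y) ∉ S := by
      intro x y hx h
      rcases hSmem _ h with h' | ⟨k, _, h'⟩
      · exact hx (Prod.ext_iff.mp h').1
      · exact hx (Prod.ext_iff.mp h').1
    unfold Fmap
    split_ifs with h1 h2
    · -- p.2 = i, a < π p.1 < b ; image (p.1, j)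
      obtain ⟨h2i, hb⟩ := h1
      have hp1i : p.1 ≠ i := by rw [← h2i]; exact ne_of_lt hlt
      have hp1j : p.1 ≠ j := ne_of_lt (lt_trans (h2i ▸ hlt) hij)
      rw [Finset.mem_sdiff]
      constructor
      · simp only [ht, Finset.mem_filter, Finset.mem_univ, true_and]
        refine ⟨lt_trans (h2i ▸ hlt) hij, ?_⟩
        rw [hσj, hσo p.1 hp1i hp1j]
        calc a = π p.2 := by rw [h2i, hπi]
        _ < π p.1 := hinv
      · exact hmemS _ _ hp1i
    · -- p.1 = j, a < π p.2 < b ; image (i, p.2)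
      obtain ⟨h1j, ha⟩ := h2
      have hp2i : p.2 ≠ i := by
        intro h; rw [h, hπi] at ha; exact lt_irrefl a ha
      have hp2j : p.2 ≠ j := (ne_of_lt (h1j ▸ hlt)).symm
      rw [Finset.mem_sdiff]
      constructor
      · simp only [ht, Finset.mem_filter, Finset.mem_univ, true_and]
        refine ⟨lt_trans hij (h1j ▸ hlt), ?_⟩
        rw [hσi, hσo p.2 hp2i hp2j]
        calc π p.2 < π p.1 := hinv
        _ = b := by rw [h1j, hπj]
      · intro h
        rcases hSmem _ h with h' | ⟨k, hk, h'⟩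
        · exact hp2j (Prod.ext_iff.mp h').2
        · have : p.2 = k := (Prod.ext_iff.mp h').2
          exact absurd ((hextra k hk).2.1) (by rw [← this]; exact not_lt.mpr (le_of_lt (h1j ▸ hlt)))
    · -- identity branch
      rw [Finset.mem_sdiff]
      by_cases e2i : p.2 = i
      · -- then b < π p.1
        have hbp : b < π p.1 := by
          have h' : ¬ π p.1 < b := fun hc => h1 ⟨e2i, hc⟩
          have hp1j : p.1 ≠ j := ne_of_lt (lt_trans (e2i ▸ hlt) hij)
          exact lt_of_le_of_ne (not_lt.mp h') (Ne.symm (hne_j p.1 hp1j))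
        have hp1i : p.1 ≠ i := by rw [← e2i]; exact ne_of_lt hlt
        have hp1j : p.1 ≠ j := ne_of_lt (lt_trans (e2i ▸ hlt) hij)
        constructor
        · simp only [ht, Finset.mem_filter, Finset.mem_univ, true_and]
          refine ⟨hlt, ?_⟩
          rw [e2i, hσi, hσo p.1 hp1i hp1j]
          exact hbp
        · exact hmemS _ _ hp1i
      · by_cases e2j : p.2 = j
        · have hbp : b < π p.1 := by rw [← hπj, ← e2j]; exact hinv
          have hp1i : p.1 ≠ i := by
            intro h; rw [h, hπi] at hbp; exact absurd (lt_trans hab hbp) (lt_irrefl a)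
          have hp1j : p.1 ≠ j := by rw [← e2j]; exact ne_of_lt hlt
          constructor
          · simp only [ht, Finset.mem_filter, Finset.mem_univ, true_and]
            refine ⟨hlt, ?_⟩
            rw [e2j, hσj, hσo p.1 hp1i hp1j]
            exact lt_trans hab hbp
          · exact hmemS _ _ hp1i
        · by_cases e1i : p.1 = i
          · have hpa : π p.2 < a := by rw [← hπi, ← e1i]; exact hinv
            constructor
            · simp only [ht, Finset.mem_filter, Finset.mem_univ, true_and]
              refine ⟨hlt, ?_⟩
              rw [e1i, hσi, hσo p.2 e2i e2j]
              exact lt_trans hpa hab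
            · intro h
              rcases hSmem _ h with h' | ⟨k, hk, h'⟩
              · exact e2j (Prod.ext_iff.mp h').2
              · have hk2 : p.2 = k := (Prod.ext_iff.mp h').2
                exact absurd (hextra k hk).2.2.1 (by rw [← hk2]; exact not_lt.mpr (le_of_lt hpa))
          · by_cases e1j : p.1 = j
            · have hpa : π p.2 < a := by
                have h' : ¬ π i < π p.2 := fun hc => h2 ⟨e1j, hc⟩
                rw [hπi] at h'
                exact lt_of_le_of_ne (not_lt.mp h') (hne_i p.2 e2i)
              constructor
              · simp only [ht, Finset.mem_filter, Finset.mem_univ, true_and]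
                refine ⟨hlt, ?_⟩
                rw [e1j, hσj, hσo p.2 e2i e2j]
                exact hpa
              · exact hmemS _ _ (e1j ▸ hij'.symm)
            · constructor
              · simp only [ht, Finset.mem_filter, Finset.mem_univ, true_and]
                refine ⟨hlt, ?_⟩
                rw [hσo p.1 e1i e1j, hσo p.2 e2i e2j]
                exact hinv
              · exact hmemS _ _ e1i
  have hinj : Set.InjOn (Fmap π i j b) s := by
    intro p hp q hq heq
    simp only [hs, Finset.coe_filter, Set.mem_setOf_eq, Finset.mem_univ, true_and] at hp hq
    obtain ⟨hltp, hinvp⟩ := hp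
    obtain ⟨hltq, hinvq⟩ := hq
    unfold Fmap at heq
    by_cases h1p : p.2 = i ∧ π p.1 < b
    · rw [if_pos h1p] at heq
      by_cases h1q : q.2 = i ∧ π q.1 < b
      · rw [if_pos h1q] at heq
        obtain ⟨e1, _⟩ := Prod.ext_iff.mp heq
        exact Prod.ext e1 (h1p.1.trans h1q.1.symm)
      · rw [if_neg h1q] at heq
        by_cases h2q : q.1 = j ∧ π i < π q.2
        · rw [if_pos h2q] at heq
          exfalso
          have e2 : j = q.2 := (Prod.ext_iff.mp heq).2
          have : j < q.2 := h2q.1 ▸ hltq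
          rw [← e2] at this; exact lt_irrefl j this
        · rw [if_neg h2q] at heq
          exfalso
          have e1 : p.1 = q.1 := (Prod.ext_iff.mp heq).1
          have e2 : j = q.2 := (Prod.ext_iff.mp heq).2
          have hb2 : π q.2 = b := by rw [← e2, hπj]
          rw [hb2] at hinvq
          have hlt' : π p.1 < b := h1p.2
          rw [e1] at hlt'
          exact absurd (lt_trans hinvq hlt') (lt_irrefl b)
    · rw [if_neg h1p] at heq
      by_cases h2p : p.1 = j ∧ π i < π p.2
      · rw [if_pos h2p] at heq
        by_cases h1q : q.2 = i ∧ π q.1 < b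
        · rw [if_pos h1q] at heq
          exfalso
          have e2 : p.2 = j := (Prod.ext_iff.mp heq).2
          have : j < p.2 := h2p.1 ▸ hltp
          rw [e2] at this; exact lt_irrefl j this
        · rw [if_neg h1q] at heq
          by_cases h2q : q.1 = j ∧ π i < π q.2
          · rw [if_pos h2q] at heq
            obtain ⟨_, e2⟩ := Prod.ext_iff.mp heq
            exact Prod.ext (h2p.1.trans h2q.1.symm) e2
          · rw [if_neg h2q] at heq
            exfalso
            have e1 : i = q.1 := (Prod.ext_iff.mp heq).1
            have e2 : p.2 = q.2 := (Prod.ext_iff.mp heq).2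
            have hq1 : π q.1 = a := by rw [← e1, hπi]
            rw [hq1] at hinvq
            have hgt := h2p.2
            rw [hπi, e2] at hgt
            exact absurd (lt_trans hgt hinvq) (lt_irrefl a)
      · rw [if_neg h2p] at heq
        by_cases h1q : q.2 = i ∧ π q.1 < b
        · rw [if_pos h1q] at heq
          exfalso
          have e1 : p.1 = q.1 := (Prod.ext_iff.mp heq).1
          have e2 : p.2 = j := (Prod.ext_iff.mp heq).2
          have hb2 : π p.2 = b := by rw [e2, hπj]
          rw [hb2] at hinvp
          have hlt' : π q.1 < b := h1q.2
          rw [← e1] at hlt'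
          exact absurd (lt_trans hinvp hlt') (lt_irrefl b)
        · rw [if_neg h1q] at heq
          by_cases h2q : q.1 = j ∧ π i < π q.2
          · rw [if_pos h2q] at heq
            exfalso
            have e1 : p.1 = i := (Prod.ext_iff.mp heq).1
            have e2 : p.2 = q.2 := (Prod.ext_iff.mp heq).2
            have hp1 : π p.1 = a := by rw [e1, hπi]
            rw [hp1] at hinvp
            have hgt := h2q.2
            rw [hπi, ← e2] at hgt
            exact absurd (lt_trans hgt hinvp) (lt_irrefl a)
          · rw [if_neg h2q] at heq
            exact heq
  have hcard : s.card ≤ (t \ S).card :=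
    Finset.card_le_card_of_injOn (Fmap π i j b) hmaps hinj
  have h1 : (t \ S).card = t.card - S.card := Finset.card_sdiff_of_subset hSsub
  have h2 : S.card ≤ t.card := Finset.card_le_card hSsub
  have hs' : invNum π = s.card := rfl
  have ht' : invNum σ = t.card := rfl
  rw [hs', ht']
  omega

private lemma orient (π : Equiv.Perm (Fin n)) {x y : Fin n} (hxy : x < y)
    (h : invNum (Equiv.swap x y * π) + 1 = invNum π) :
    π.symm y < π.symm x := by
  rcases lt_trichotomy (π.symm x) (π.symm y) with hlt | heq | hgt
  · exfalso
    have := key_lemma π hxy (π.apply_symm_apply x) (π.apply_symm_apply y) hlt ∅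
      (by intro k hk; exact absurd hk (Finset.notMem_empty k))
    simp only [Finset.card_empty] at this
    omega
  · exact absurd (π.symm.injective heq) (ne_of_lt hxy)
  · exact hgt

end Aux

/-- The strong descent graph is triangle-free. -/
theorem strong_descent_graph_triangle_free {n : ℕ} (π : Equiv.Perm (Fin n)) :
    ¬ ∃ a b c : Fin n, a < b ∧ b < c ∧
      invNum (Equiv.swap a b * π) + 1 = invNum π ∧
      invNum (Equiv.swap a c * π) + 1 = invNum π ∧
      invNum (Equiv.swap b c * π) + 1 = invNum π := by
  rintro ⟨a, b, c, hab, hbc, eab, eac, ebc⟩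
  have hac : a < c := lt_trans hab hbc
  have o1 : π.symm b < π.symm a := orient π hab eab
  have o2 : π.symm c < π.symm b := orient π hbc ebc
  -- apply key lemma to σ = swap a c * π with witness π.symm b
  set σ : Equiv.Perm (Fin n) := Equiv.swap a c * π with hσdef
  have hσ1 : σ (π.symm c) = a := by
    simp [hσdef, Equiv.Perm.mul_apply]
  have hσ2 : σ (π.symm a) = c := by
    simp [hσdef, Equiv.Perm.mul_apply]
  have hσb : σ (π.symm b) = b := by
    simp only [hσdef, Equiv.Perm.mul_apply, Equiv.apply_symm_apply]
    exact Equiv.swap_apply_of_ne_of_ne (ne_of_lt hab).symm (ne_of_lt hbc)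
  have hkey := key_lemma σ hac hσ1 hσ2 (lt_trans o2 o1) {π.symm b} ?_
  · have hswap : Equiv.swap a c * σ = π := by
      rw [hσdef, ← mul_assoc, Equiv.swap_mul_self, one_mul]
    rw [hswap, Finset.card_singleton] at hkey
    omega
  · intro k hk
    have hk' : k = π.symm b := Finset.mem_singleton.mp hk
    subst hk'
    exact ⟨o2, o1, by rw [hσb]; exact hab, by rw [hσb]; exact hbc⟩
end

section
/- For every positive integer n and every π ∈ S_n, the down degree satisfies d_−(π) ≤ ⌊n²/4⌋. -/
open Equiv Finset

/-!
Left multiplication by the transposition `t_{a,b}`, `a < b`, lowers the length of `π` exactly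
when `b` stands to the left of `a` in the one-line notation of `π`. If `t_{a,b} π` and
`t_{b,c} π` (`a < b < c`) are both shorter than `π`, then `t_{a,c} π = t_{b,c} t_{a,b} t_{b,c} π`
is reached from `π` by three length-decreasing steps, so `ℓ(t_{a,c} π) ≤ ℓ(π) - 3`. Hence the
strong descent graph, joining `a` and `b` when `ℓ(t_{a,b} π) = ℓ(π) - 1`, is triangle-free, and
Mantel's theorem bounds its number of edges, which is `d_−(π)`, by `⌊n²/4⌋`.
-/

namespace SimpleGraph

variable {α : Type*}

theorem CliqueFree.card_edgeFinset_le_sq_div_four [Fintype α] {G : SimpleGraph α}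
    [DecidableRel G.Adj] (hG : G.CliqueFree 3) : #G.edgeFinset ≤ Fintype.card α ^ 2 / 4 := by
  refine (hG.card_edgeFinset_le (r := 2)).trans ?_
  simp only [Nat.reduceSubDiff, mul_one, Nat.reduceMul]
  rw [Nat.choose_eq_zero_of_lt (by omega), add_zero]
  exact Nat.div_le_div_right (Nat.sub_le _ _)

theorem card_edgeFinset_eq_card_filter_lt [Fintype α] [LinearOrder α] (G : SimpleGraph α)
    [DecidableRel G.Adj] : #G.edgeFinset = #{p : α × α | p.1 < p.2 ∧ G.Adj p.1 p.2} := by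
  symm
  refine card_nbij (fun p => s(p.1, p.2)) ?_ ?_ ?_
  · rintro ⟨a, b⟩ h
    simp only [coe_filter, mem_univ, true_and, Set.mem_ofPred_eq] at h
    simpa using h.2
  · rintro ⟨a, b⟩ h ⟨c, d⟩ h' he
    simp only [coe_filter, mem_univ, true_and, Set.mem_ofPred_eq] at h h'
    rcases Sym2.eq_iff.1 he with ⟨rfl, rfl⟩ | ⟨rfl, rfl⟩
    · rfl
    · exact absurd h.1 h'.1.not_gt
  · rintro e he
    induction e with | h a b => ?_
    simp only [coe_edgeFinset, mem_edgeSet] at he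
    rcases he.ne.lt_or_gt with h | h
    · exact ⟨(a, b), by simp [h, he], rfl⟩
    · exact ⟨(b, a), by simp [h, he.symm], Sym2.eq_swap⟩

theorem cliqueFree_three_of_forall_lt [LinearOrder α] {G : SimpleGraph α}
    (h : ∀ a b c, a < b → b < c → G.Adj a b → G.Adj b c → G.Adj a c → False) :
    G.CliqueFree 3 := by
  classical
  intro s hs
  obtain ⟨a, b, c, hab, hac, hbc, -⟩ := is3Clique_iff.1 hs
  rcases hab.ne.lt_or_gt with _ | _ <;> rcases hac.ne.lt_or_gt with _ | _ <;>
    rcases hbc.ne.lt_or_gt with _ | _ <;> grind [G.adj_symm]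

end SimpleGraph

section StrongDescent

variable {n : ℕ}

def inversions (σ : Perm (Fin n)) : Finset (Fin n × Fin n) := {p | p.1 < p.2 ∧ σ p.2 < σ p.1}

@[simp]
theorem mem_inversions {σ : Perm (Fin n)} {p : Fin n × Fin n} :
    p ∈ inversions σ ↔ p.1 < p.2 ∧ σ p.2 < σ p.1 := by
  simp [inversions]

theorem invNum_eq_card_inversions (σ : Perm (Fin n)) : invNum σ = #(inversions σ) := rfl

theorem invNum_mul_swap_lt {σ : Perm (Fin n)} {i j : Fin n} (hij : i < j) (hσ : σ j < σ i) :
    invNum (σ * swap i j) < invNum σ := by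
  rw [invNum_eq_card_inversions, invNum_eq_card_inversions]
  set s := swap i j
  -- `φ` relabels an inversion of `σ * s` by `s` when that keeps its coordinates in order and
  -- leaves it alone otherwise: an injection into the inversions of `σ` that misses `(i, j)`.
  let φ : Fin n × Fin n → Fin n × Fin n := fun p => if s p.1 < s p.2 then (s p.1, s p.2) else p
  have hφ : Set.MapsTo φ (inversions (σ * s)) ((inversions σ).erase (i, j)) := by
    rintro ⟨a, b⟩ hp
    simp only [mem_coe, mem_inversions, Perm.mul_apply] at hp
    simp only [φ, mem_coe, mem_erase, mem_inversions, ne_eq, Prod.ext_iff]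
    split_ifs with h
    · refine ⟨fun ⟨ha, hb⟩ => ?_, h, hp.2⟩
      rw [swap_apply_eq_iff, swap_apply_left] at ha
      rw [swap_apply_eq_iff, swap_apply_right] at hb
      exact (hij.trans (ha ▸ hb ▸ hp.1)).false
    · have hσij := σ.injective.ne hij.ne
      rw [swap_apply_def, swap_apply_def] at h hp
      split_ifs at h hp <;> subst_vars <;> simp_all <;> order
  have hφ_inj : Set.InjOn φ (inversions (σ * s)) := by
    rintro ⟨a, b⟩ hp ⟨c, d⟩ hq he
    simp only [mem_coe, mem_inversions] at hp hq
    simp only [φ] at he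
    split_ifs at he with h₁ h₂ h₂ <;> simp only [Prod.mk.injEq] at he
    · simp [s.injective he.1, s.injective he.2]
    · rw [← he.1, ← he.2, swap_apply_self, swap_apply_self] at h₂
      exact absurd hp.1 h₂
    · rw [he.1, he.2, swap_apply_self, swap_apply_self] at h₁
      exact absurd hq.1 h₁
    · rw [he.1, he.2]
  calc #(inversions (σ * s)) ≤ #((inversions σ).erase (i, j)) :=
        card_le_card_of_injOn φ hφ hφ_inj
    _ < #(inversions σ) := card_erase_lt_of_mem (by simp [hij, hσ])

theorem invNum_swap_mul_lt_iff {σ : Perm (Fin n)} {x y : Fin n} (hxy : x < y) :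
    invNum (swap x y * σ) < invNum σ ↔ σ⁻¹ y < σ⁻¹ x := by
  have descent {τ : Perm (Fin n)} (h : τ⁻¹ y < τ⁻¹ x) : invNum (swap x y * τ) < invNum τ := by
    rw [swap_mul_eq_mul_swap, swap_comm]
    exact invNum_mul_swap_lt h (by simpa using hxy)
  refine ⟨fun h => ?_, descent⟩
  by_contra! hle
  have hne : σ⁻¹ x ≠ σ⁻¹ y := σ⁻¹.injective.ne hxy.ne
  have := @descent (swap x y * σ) (by simpa [mul_inv_rev] using hle.lt_of_ne hne)
  rw [← mul_assoc, swap_mul_self, one_mul] at this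
  exact (h.trans this).false

theorem invNum_swap_mul_add_three_le {π : Perm (Fin n)} {a b c : Fin n} (hab : a < b)
    (hbc : b < c) (hba : π⁻¹ b < π⁻¹ a) (hcb : π⁻¹ c < π⁻¹ b) :
    invNum (swap a c * π) + 3 ≤ invNum π := by
  have hac := hab.trans hbc
  have h₁ : invNum (swap b c * π) < invNum π := (invNum_swap_mul_lt_iff hbc).2 hcb
  have h₂ : invNum (swap a b * (swap b c * π)) < invNum (swap b c * π) := by
    refine (invNum_swap_mul_lt_iff hab).2 ?_
    simpa [mul_inv_rev, swap_apply_of_ne_of_ne hab.ne hac.ne] using hcb.trans hba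
  have h₃ : invNum (swap b c * (swap a b * (swap b c * π))) <
      invNum (swap a b * (swap b c * π)) := by
    refine (invNum_swap_mul_lt_iff hbc).2 ?_
    simpa [mul_inv_rev, swap_apply_of_ne_of_ne hab.ne hac.ne,
      swap_apply_of_ne_of_ne hac.ne' hbc.ne'] using hba
  rw [← mul_assoc, ← mul_assoc, swap_mul_swap_mul_swap hab.ne hac.ne, swap_comm] at h₃
  omega

def strongDescentGraph (π : Perm (Fin n)) : SimpleGraph (Fin n) where
  Adj a b := a ≠ b ∧ invNum (swap a b * π) + 1 = invNum π
  symm := ⟨fun a b h => ⟨h.1.symm, swap_comm a b ▸ h.2⟩⟩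
  loopless := ⟨fun _ h => h.1 rfl⟩

instance (π : Perm (Fin n)) : DecidableRel (strongDescentGraph π).Adj :=
  fun _ _ => by dsimp only [strongDescentGraph]; infer_instance

theorem strongDescentGraph_cliqueFree_three (π : Perm (Fin n)) :
    (strongDescentGraph π).CliqueFree 3 := by
  refine SimpleGraph.cliqueFree_three_of_forall_lt fun a b c hab hbc ⟨_, h₁⟩ ⟨_, h₂⟩ ⟨_, h₃⟩ => ?_
  have hba : π⁻¹ b < π⁻¹ a := (invNum_swap_mul_lt_iff hab).1 (by omega)
  have hcb : π⁻¹ c < π⁻¹ b := (invNum_swap_mul_lt_iff hbc).1 (by omega)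
  have := invNum_swap_mul_add_three_le hab hbc hba hcb
  omega

theorem card_edgeFinset_strongDescentGraph (π : Perm (Fin n)) :
    #(strongDescentGraph π).edgeFinset = downDeg π := by
  rw [SimpleGraph.card_edgeFinset_eq_card_filter_lt, downDeg]
  congr! 2 with p
  simp only [strongDescentGraph]
  exact and_congr_right fun h => and_iff_right h.ne

end StrongDescent

theorem downDeg_le_general {n : ℕ} (π : Equiv.Perm (Fin n)) :
    downDeg π ≤ n ^ 2 / 4 := by
  rw [← card_edgeFinset_strongDescentGraph]
  simpa using (strongDescentGraph_cliqueFree_three π).card_edgeFinset_le_sq_div_four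

theorem downDeg_le {n : ℕ} (hn : 0 < n) (π : Equiv.Perm (Fin n)) :
    downDeg π ≤ n ^ 2 / 4 :=
  downDeg_le_general π
end

section
/- The triple sum Σ_{i=2}^n Σ_{j=2}^i Σ_{k=2}^j 1/(i·(k−1)) equals (n+1)·Σ_{i=1}^n 1/i − 2n for every positive integer n. -/
open Finset

/-!
The innermost sum is the harmonic number `H (j - 1)`, and summing harmonic numbers gives
`∑_{j ≤ m} H j = (m + 1) H m - m`. Hence the `i`-th row of the triple sum is
`(i H (i - 1) - (i - 1)) / i = H i - 1`, and summing these rows once more yields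
`(n + 1) H n - 2 n`.
-/

theorem sum_Icc_two_one_div_sub_one (j : ℕ) :
    ∑ k ∈ Icc 2 (j + 1), 1 / ((k : ℚ) - 1) = harmonic j := by
  induction j with
  | zero => simp
  | succ j ih =>
    rw [sum_Icc_succ_top (by omega), ih, harmonic_succ]
    push_cast
    ring

theorem sum_Icc_harmonic (m : ℕ) :
    ∑ j ∈ Icc 1 m, harmonic j = (m + 1) * harmonic m - m := by
  induction m with
  | zero => simp
  | succ m ih =>
    rw [sum_Icc_succ_top (by omega), ih, harmonic_succ]
    push_cast
    field_simp
    ring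

theorem sum_Icc_two_sum_Icc_two_one_div_sub_one (m : ℕ) :
    ∑ j ∈ Icc 2 (m + 1), ∑ k ∈ Icc 2 j, 1 / ((k : ℚ) - 1) = (m + 1) * harmonic m - m := by
  rw [← map_add_right_Icc 1 m 1, sum_map]
  simp only [addRightEmbedding_apply, sum_Icc_two_one_div_sub_one, sum_Icc_harmonic]

theorem sum_Icc_two_sum_Icc_two_one_div_mul_sub_one {i : ℕ} (hi : i ≠ 0) :
    ∑ j ∈ Icc 2 i, ∑ k ∈ Icc 2 j, 1 / ((i : ℚ) * ((k : ℚ) - 1)) = harmonic i - 1 := by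
  obtain ⟨m, rfl⟩ := Nat.exists_eq_succ_of_ne_zero hi
  simp_rw [← one_div_mul_one_div, ← mul_sum, sum_Icc_two_sum_Icc_two_one_div_sub_one,
    harmonic_succ]
  push_cast
  field_simp
  ring

theorem sum_Icc_two_harmonic_sub_one (n : ℕ) :
    ∑ i ∈ Icc 2 n, (harmonic i - 1) = (n + 1) * harmonic n - 2 * n := by
  rcases Nat.eq_zero_or_pos n with rfl | hn
  · simp
  calc ∑ i ∈ Icc 2 n, (harmonic i - 1)
      = ∑ i ∈ Icc 1 n, (harmonic i - 1) := by
        rw [← insert_Icc_add_one_left_eq_Icc (a := 1) hn, sum_insert (by simp)]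
        simp
    _ = (n + 1) * harmonic n - 2 * n := by
        rw [sum_sub_distrib, sum_Icc_harmonic]
        simp only [sum_const, Nat.card_Icc, add_tsub_cancel_right, nsmul_eq_mul, mul_one]
        ring

theorem triple_sum_identity_general {n : ℕ} :
    (∑ i ∈ Finset.Icc 2 n, ∑ j ∈ Finset.Icc 2 i, ∑ k ∈ Finset.Icc 2 j,
        (1 : ℚ) / ((i : ℚ) * ((k : ℚ) - 1))) =
      (n + 1) * (∑ i ∈ Finset.Icc 1 n, (1 : ℚ) / i) - 2 * n := by
  rw [sum_congr rfl fun i hi => sum_Icc_two_sum_Icc_two_one_div_mul_sub_one (by grind),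
    sum_Icc_two_harmonic_sub_one]
  simp only [one_div, harmonic_eq_sum_Icc]

theorem triple_sum_identity {n : ℕ} (hn : 0 < n) :
    (∑ i ∈ Finset.Icc 2 n, ∑ j ∈ Finset.Icc 2 i, ∑ k ∈ Finset.Icc 2 j,
        (1 : ℚ) / ((i : ℚ) * ((k : ℚ) - 1))) =
      (n + 1) * (∑ i ∈ Finset.Icc 1 n, (1 : ℚ) / i) - 2 * n :=
  triple_sum_identity_general
end

section
/- For every π ∈ S_n and 1 ≤ r < n, the r-th strong descent graph Γ_−^{(r)}(π) contains no complete subgraph on r+2 vertices. -/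
open Equiv Finset

lemma key_lemma_s18 {n : ℕ} (π : Equiv.Perm (Fin n)) {a b : Fin n} (hab : a < b)
    (hba : π.symm b < π.symm a) :
    invNum (Equiv.swap a b * π) + 1 +
      2 * (Finset.univ.filter (fun p : Fin n =>
        π.symm b < p ∧ p < π.symm a ∧ a < π p ∧ π p < b)).card ≤ invNum π := by
  classical
  set j := π.symm b with hjdef
  set i := π.symm a with hidef
  set σ := Equiv.swap a b * π with hσdef
  have hji : j < i := hba
  have hπj : π j = b := π.apply_symm_apply b
  have hπi : π i = a := π.apply_symm_apply a
  have hσapp : ∀ x, σ x = Equiv.swap a b (π x) := fun x => rfl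
  have hσj : σ j = a := by rw [hσapp, hπj, Equiv.swap_apply_right]
  have hσi : σ i = b := by rw [hσapp, hπi, Equiv.swap_apply_left]
  have hπa : ∀ x : Fin n, x ≠ i → π x ≠ a := by
    intro x hx h
    exact hx (by rw [hidef, ← h, Equiv.symm_apply_apply])
  have hπb : ∀ x : Fin n, x ≠ j → π x ≠ b := by
    intro x hx h
    exact hx (by rw [hjdef, ← h, Equiv.symm_apply_apply])
  have hσx : ∀ x : Fin n, x ≠ i → x ≠ j → σ x = π x := by
    intro x hxi hxj
    rw [hσapp, Equiv.swap_apply_of_ne_of_ne (hπa x hxi) (hπb x hxj)]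
  set A := Finset.univ.filter (fun p : Fin n × Fin n => p.1 < p.2 ∧ π p.2 < π p.1) with hAdef
  set B := Finset.univ.filter (fun p : Fin n × Fin n => p.1 < p.2 ∧ σ p.2 < σ p.1) with hBdef
  set Mset := Finset.univ.filter (fun p : Fin n => j < p ∧ p < i ∧ a < π p ∧ π p < b)
    with hMdef
  have hAmem : ∀ p : Fin n × Fin n, p ∈ A ↔ p.1 < p.2 ∧ π p.2 < π p.1 := by
    intro p; simp [hAdef]
  have hBmem : ∀ p : Fin n × Fin n, p ∈ B ↔ p.1 < p.2 ∧ σ p.2 < σ p.1 := by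
    intro p; simp [hBdef]
  have hMmem : ∀ p : Fin n, p ∈ Mset ↔ j < p ∧ p < i ∧ a < π p ∧ π p < b := by
    intro p; simp [hMdef]
  set D : Finset (Fin n × Fin n) :=
    insert (j, i) ((Mset.image fun p => (j, p)) ∪ (Mset.image fun p => (p, i))) with hDdef
  set T := (B \ A) ∪ D with hTdef
  set f : Fin n × Fin n → Fin n × Fin n :=
    fun x => if x.2 = j then (x.1, i) else if x.1 = i then (j, x.2) else x with hfdef
  set g : Fin n × Fin n → Fin n × Fin n :=
    fun x => if x.2 = i ∧ x.1 < j then (x.1, j)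
      else if x.1 = j ∧ i < x.2 then (i, x.2) else x with hgdef
  -- D is contained in A
  have hDsubA : D ⊆ A := by
    intro x hx
    rw [hDdef] at hx
    rcases Finset.mem_insert.1 hx with h | h
    · subst h; rw [hAmem]; exact ⟨hji, by rw [hπi, hπj]; exact hab⟩
    · rcases Finset.mem_union.1 h with h | h
      · obtain ⟨p, hp, hpe⟩ := Finset.mem_image.1 h
        obtain ⟨h1, h2, h3, h4⟩ := (hMmem p).1 hp
        subst hpe
        rw [hAmem]; exact ⟨h1, by rw [hπj]; exact h4⟩
      · obtain ⟨p, hp, hpe⟩ := Finset.mem_image.1 h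
        obtain ⟨h1, h2, h3, h4⟩ := (hMmem p).1 hp
        subst hpe
        rw [hAmem]; exact ⟨h2, by rw [hπi]; exact h3⟩
  -- main property: f maps T into A \ B, with g a left inverse on T
  have hmain : ∀ x ∈ T, f x ∈ A \ B ∧ g (f x) = x := by
    rintro ⟨p, q⟩ hx
    rw [hTdef] at hx
    rcases Finset.mem_union.1 hx with hx | hx
    · -- x ∈ B \ A
      obtain ⟨hB1, hA1⟩ := Finset.mem_sdiff.1 hx
      obtain ⟨hpq, hσlt⟩ := (hBmem _).1 hB1
      have hle : ¬ (π q < π p) := fun h => hA1 ((hAmem _).2 ⟨hpq, h⟩)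
      push_neg at hle
      by_cases hq : q = j
      · subst hq
        have hpj : p ≠ j := ne_of_lt hpq
        have hpi : p ≠ i := ne_of_lt (lt_trans hpq hji)
        have hσp : σ p = π p := hσx p hpi hpj
        have h1 : a < π p := by rw [hσj, hσp] at hσlt; exact hσlt
        have h2 : π p < b := lt_of_le_of_ne (by rwa [hπj] at hle) (hπb p hpj)
        have hfx : f (p, j) = (p, i) := by simp [hfdef]
        refine ⟨?_, ?_⟩
        · rw [hfx, Finset.mem_sdiff, hAmem, hBmem]
          refine ⟨⟨lt_trans hpq hji, by rw [hπi]; exact h1⟩, ?_⟩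
          rintro ⟨-, hc⟩
          rw [hσi, hσx p hpi hpj] at hc
          exact absurd (lt_trans h2 hc) (lt_irrefl _)
        · rw [hfx, hgdef]
          simp [hpq]
      · by_cases hp : p = i
        · subst hp
          have hqi : q ≠ i := (ne_of_lt hpq).symm
          have hqj : q ≠ j := fun h => hq h
          have hσq : σ q = π q := hσx q hqi hqj
          have h1 : π q < b := by rw [hσi, hσq] at hσlt; exact hσlt
          have h2 : a < π q := lt_of_le_of_ne (by rwa [hπi] at hle) (Ne.symm (hπa q hqi))
          have hfx : f (i, q) = (j, q) := by simp [hfdef, hqj]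
          refine ⟨?_, ?_⟩
          · rw [hfx, Finset.mem_sdiff, hAmem, hBmem]
            refine ⟨⟨lt_trans hji hpq, by rw [hπj]; exact h1⟩, ?_⟩
            rintro ⟨-, hc⟩
            rw [hσj, hσq] at hc
            exact absurd (lt_trans h2 hc) (lt_irrefl _)
          · rw [hfx, hgdef]
            simp [hqi, hpq]
        · -- contradiction cases
          exfalso
          by_cases hqi : q = i
          · subst hqi
            by_cases hpj : p = j
            · subst hpj
              rw [hσi, hσj] at hσlt
              exact absurd (lt_trans hab hσlt) (lt_irrefl _)
            · rw [hσi, hσx p hp hpj] at hσlt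
              have : π p ≤ a := by rwa [hπi] at hle
              exact absurd (lt_of_lt_of_le hσlt (le_trans this (le_of_lt hab)))
                (lt_irrefl _)
          · by_cases hpj : p = j
            · subst hpj
              rw [hσj, hσx q hqi hq] at hσlt
              have : b ≤ π q := by rwa [hπj] at hle
              exact absurd (lt_of_le_of_lt this (lt_trans hσlt hab)) (lt_irrefl _)
            · rw [hσx p hp hpj, hσx q hqi hq] at hσlt
              exact absurd (lt_of_le_of_lt hle hσlt) (lt_irrefl _)
    · -- x ∈ D
      rw [hDdef] at hx
      have hAB : (p, q) ∈ A \ B ∧ f (p, q) = (p, q) ∧ g (p, q) = (p, q) := by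
        rcases Finset.mem_insert.1 hx with h | h
        · rw [Prod.mk.injEq] at h
          obtain ⟨rfl, rfl⟩ := h
          refine ⟨?_, ?_, ?_⟩
          · rw [Finset.mem_sdiff, hAmem, hBmem]
            refine ⟨⟨hji, by rw [hπi, hπj]; exact hab⟩, ?_⟩
            rintro ⟨-, hc⟩
            rw [hσi, hσj] at hc
            exact absurd (lt_trans hab hc) (lt_irrefl _)
          · rw [hfdef]; simp only
            rw [if_neg (ne_of_lt hji).symm, if_neg (ne_of_lt hji)]
          · rw [hgdef]; simp only
            rw [if_neg (by rintro ⟨-, h⟩; exact absurd h (lt_irrefl _)),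
              if_neg (by rintro ⟨-, h⟩; exact absurd h (lt_irrefl _))]
        · rcases Finset.mem_union.1 h with h | h
          · obtain ⟨c, hc, hce⟩ := Finset.mem_image.1 h
            rw [Prod.mk.injEq] at hce
            obtain ⟨rfl, rfl⟩ := hce
            obtain ⟨h1, h2, h3, h4⟩ := (hMmem c).1 hc
            have hcj : c ≠ j := (ne_of_lt h1).symm
            have hci : c ≠ i := ne_of_lt h2
            refine ⟨?_, ?_, ?_⟩
            · rw [Finset.mem_sdiff, hAmem, hBmem]
              refine ⟨⟨h1, by rw [hπj]; exact h4⟩, ?_⟩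
              rintro ⟨-, hc'⟩
              rw [hσj, hσx c hci hcj] at hc'
              exact absurd (lt_trans h3 hc') (lt_irrefl _)
            · rw [hfdef]; simp only
              rw [if_neg hcj, if_neg (ne_of_lt hji)]
            · rw [hgdef]; simp only
              rw [if_neg (by rintro ⟨h, -⟩; exact hci h),
                if_neg (by rintro ⟨-, h⟩; exact absurd (lt_trans h2 h) (lt_irrefl _))]
          · obtain ⟨c, hc, hce⟩ := Finset.mem_image.1 h
            rw [Prod.mk.injEq] at hce
            obtain ⟨rfl, rfl⟩ := hce
            obtain ⟨h1, h2, h3, h4⟩ := (hMmem c).1 hc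
            have hcj : c ≠ j := (ne_of_lt h1).symm
            have hci : c ≠ i := ne_of_lt h2
            refine ⟨?_, ?_, ?_⟩
            · rw [Finset.mem_sdiff, hAmem, hBmem]
              refine ⟨⟨h2, by rw [hπi]; exact h3⟩, ?_⟩
              rintro ⟨-, hc'⟩
              rw [hσi, hσx c hci hcj] at hc'
              exact absurd (lt_trans h4 hc') (lt_irrefl _)
            · rw [hfdef]; simp only
              rw [if_neg (ne_of_lt hji).symm, if_neg hci]
            · rw [hgdef]; simp only
              rw [if_neg (by rintro ⟨-, h⟩; exact absurd (lt_trans h1 h) (lt_irrefl _)),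
                if_neg (by rintro ⟨h, -⟩; exact hcj h)]
      exact ⟨by rw [hAB.2.1]; exact hAB.1, by rw [hAB.2.1, hAB.2.2]⟩
  have hcard_le : T.card ≤ (A \ B).card := by
    apply Finset.card_le_card_of_injOn f (fun x hx => (hmain x hx).1)
    intro x hx y hy hxy
    rw [← (hmain x hx).2, ← (hmain y hy).2, hxy]
  -- cardinality of D
  have hMj : j ∉ Mset := fun h => absurd ((hMmem j).1 h).1 (lt_irrefl j)
  have hMi : i ∉ Mset := fun h => absurd ((hMmem i).1 h).2.1 (lt_irrefl i)
  have hinj1 : Function.Injective (fun p : Fin n => ((j, p) : Fin n × Fin n)) := by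
    intro p q h; exact congrArg Prod.snd h
  have hinj2 : Function.Injective (fun p : Fin n => ((p, i) : Fin n × Fin n)) := by
    intro p q h; exact congrArg Prod.fst h
  have hdisj_img : Disjoint (Mset.image fun p => ((j, p) : Fin n × Fin n))
      (Mset.image fun p => ((p, i) : Fin n × Fin n)) := by
    rw [Finset.disjoint_left]
    rintro ⟨x, y⟩ h1 h2
    obtain ⟨c, hc, hce⟩ := Finset.mem_image.1 h1
    obtain ⟨d, hd, hde⟩ := Finset.mem_image.1 h2
    rw [Prod.mk.injEq] at hce hde
    have : d = j := hde.1.trans hce.1.symm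
    exact hMj (this ▸ hd)
  have hji_notmem : (j, i) ∉ (Mset.image fun p => ((j, p) : Fin n × Fin n)) ∪
      (Mset.image fun p => ((p, i) : Fin n × Fin n)) := by
    intro h
    rcases Finset.mem_union.1 h with h | h
    · obtain ⟨c, hc, hce⟩ := Finset.mem_image.1 h
      rw [Prod.mk.injEq] at hce
      exact hMi (hce.2 ▸ hc)
    · obtain ⟨c, hc, hce⟩ := Finset.mem_image.1 h
      rw [Prod.mk.injEq] at hce
      exact hMj (hce.1 ▸ hc)
  have hDcard : D.card = 1 + 2 * Mset.card := by
    rw [hDdef, Finset.card_insert_of_notMem hji_notmem,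
      Finset.card_union_of_disjoint hdisj_img,
      Finset.card_image_of_injective _ hinj1, Finset.card_image_of_injective _ hinj2]
    ring
  have hdisjBD : Disjoint (B \ A) D := by
    rw [Finset.disjoint_left]
    intro x hx hxD
    exact (Finset.mem_sdiff.1 hx).2 (hDsubA hxD)
  have hTcard : T.card = (B \ A).card + (1 + 2 * Mset.card) := by
    rw [hTdef, Finset.card_union_of_disjoint hdisjBD, hDcard]
  have h1 : (A ∩ B).card + (A \ B).card = A.card := Finset.card_inter_add_card_sdiff A B
  have h2 : (B ∩ A).card + (B \ A).card = B.card := Finset.card_inter_add_card_sdiff B A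
  have h3 : (A ∩ B).card = (B ∩ A).card := by rw [Finset.inter_comm]
  have hinvA : invNum π = A.card := rfl
  have hinvB : invNum σ = B.card := rfl
  rw [hinvA, hinvB]
  omega

lemma lt_invNum_of_orders {n : ℕ} (π : Equiv.Perm (Fin n)) {a b : Fin n} (hab : a < b)
    (h : π.symm a < π.symm b) : invNum π < invNum (Equiv.swap a b * π) := by
  have hs1 : (Equiv.swap a b * π).symm b = π.symm a := by
    rw [Equiv.symm_apply_eq]
    simp [Equiv.Perm.mul_apply]
  have hs2 : (Equiv.swap a b * π).symm a = π.symm b := by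
    rw [Equiv.symm_apply_eq]
    simp [Equiv.Perm.mul_apply]
  have hk := key_lemma_s18 (Equiv.swap a b * π) hab (by rw [hs1, hs2]; exact h)
  have hswap : Equiv.swap a b * (Equiv.swap a b * π) = π := by
    rw [← mul_assoc, Equiv.swap_mul_self, one_mul]
  rw [hswap] at hk
  omega

/-- The r-th strong descent graph contains no complete subgraph on r+2 vertices. -/
theorem rth_descent_graph_no_complete {n r : ℕ} (hr : 1 ≤ r) (hrn : r < n)
    (π : Equiv.Perm (Fin n)) :
    ¬ ∃ S : Finset (Fin n), S.card = r + 2 ∧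
      ∀ a ∈ S, ∀ b ∈ S, a ≠ b →
        (invNum (Equiv.swap a b * π) < invNum π ∧
          invNum π < invNum (Equiv.swap a b * π) + 2 * r) := by
  rintro ⟨S, hcard, hcl⟩
  have hSne : S.Nonempty := Finset.card_pos.1 (by omega)
  set a := S.min' hSne with ha
  set b := S.max' hSne with hb
  have haS : a ∈ S := S.min'_mem hSne
  have hbS : b ∈ S := S.max'_mem hSne
  have hab : a < b := S.min'_lt_max'_of_card (by omega)
  have hrev : ∀ x ∈ S, ∀ y ∈ S, x < y → π.symm y < π.symm x := by
    intro x hx y hy hxy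
    rcases lt_trichotomy (π.symm y) (π.symm x) with h | h | h
    · exact h
    · exact absurd (π.symm.injective h) (ne_of_lt hxy).symm
    · exact absurd (hcl x hx y hy (ne_of_lt hxy)).1
        (not_lt_of_gt (lt_invNum_of_orders π hxy h))
  set Mset := Finset.univ.filter (fun p : Fin n =>
    π.symm b < p ∧ p < π.symm a ∧ a < π p ∧ π p < b) with hMdef
  have hk := key_lemma_s18 π hab (hrev a haS b hbS hab)
  rw [← hMdef] at hk
  have hsub : (S \ {a, b}).image π.symm ⊆ Mset := by
    intro p hp
    obtain ⟨c, hc, rfl⟩ := Finset.mem_image.1 hp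
    rw [Finset.mem_sdiff] at hc
    have hcS := hc.1
    have hcne : c ≠ a ∧ c ≠ b := by
      have := hc.2
      simp only [Finset.mem_insert, Finset.mem_singleton] at this
      tauto
    have h1 : a < c := lt_of_le_of_ne (S.min'_le c hcS) (Ne.symm hcne.1)
    have h2 : c < b := lt_of_le_of_ne (S.le_max' c hcS) hcne.2
    rw [hMdef, Finset.mem_filter]
    refine ⟨Finset.mem_univ _, hrev c hcS b hbS h2, hrev a haS c hcS h1, ?_⟩
    rw [π.apply_symm_apply]
    exact ⟨h1, h2⟩
  have hMcard : r ≤ Mset.card := by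
    have hsubS : ({a, b} : Finset (Fin n)) ⊆ S := by
      intro x hx
      simp only [Finset.mem_insert, Finset.mem_singleton] at hx
      rcases hx with rfl | rfl
      exacts [haS, hbS]
    have h1 : (S \ {a, b}).card = r := by
      rw [Finset.card_sdiff_of_subset hsubS, Finset.card_pair (ne_of_lt hab), hcard]
      omega
    calc r = ((S \ {a, b}).image π.symm).card := by
            rw [Finset.card_image_of_injective _ π.symm.injective, h1]
      _ ≤ Mset.card := Finset.card_le_card hsub
  have hcl2 := hcl a haS b hbS (ne_of_lt hab)
  omega
end
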